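/- Let Π be a set of probability mass functions on a finite Θ, and for each π ∈ Π define the non-dominated set A^π = {a ∈ A | ¬∃ a' : d_π(a',a) ≥ 0 ∧ d_π(a,a') < 0} where d_π(a1,a2) = inf_{φ ∈ N} (E_π(φ∘u(a1,·)) − E_π(φ∘u(a2,·))) for a fixed nonempty set N of functions φ : ℝ^K → ℝ, and define D(a1,a2) = inf_{π∈Π} d_π(a1,a2) and A^Π = {a | ¬∃ a' : D(a',a) ≥ 0 ∧ D(a,a') < 0}. Then if a ∈ A^π for every π ∈ Π, one has a ∈ A^Π; in particular ⋂_{π∈Π} A^π ⊆ A^Π whenever Π is finite and nonempty and all infima are attained. -/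

import Mathlib

theorem Finset.not_exists_dominating_inf' {ι α β : Type*} [LinearOrder β] [Zero β]
    {s : Finset ι} (hs : s.Nonempty) (d : ι → α → α → β) {a : α}
    (h : ∀ i ∈ s, ¬ ∃ a', d i a' a ≥ 0 ∧ d i a a' < 0) :
    ¬ ∃ a', s.inf' hs (fun i => d i a' a) ≥ 0 ∧ s.inf' hs (fun i => d i a a') < 0 := by
  rintro ⟨a', h_ge, h_lt⟩
  obtain ⟨i, hi, hi_lt⟩ := (Finset.inf'_lt_iff hs).mp h_lt
  exact h i hi ⟨a', h_ge.trans (Finset.inf'_le _ hi), hi_lt⟩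

theorem intersection_subset_credal_nondominated_general
    {A Θ : Type} [Fintype Θ] {K : ℕ}
    (u : A → Θ → Fin K → ℝ)
    (N : Finset ((Fin K → ℝ) → ℝ)) (hN : N.Nonempty)
    (P : Finset (Θ → ℝ)) (hP : P.Nonempty) :
    let d : (Θ → ℝ) → A → A → ℝ := fun π a1 a2 =>
      N.inf' hN (fun φ => (∑ θ, φ (u a1 θ) * π θ) - ∑ θ, φ (u a2 θ) * π θ)
    let D : A → A → ℝ := fun a1 a2 => P.inf' hP (fun π => d π a1 a2)
    ∀ a : A, (∀ π ∈ P, ¬ ∃ a', d π a' a ≥ 0 ∧ d π a a' < 0) →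
      ¬ ∃ a', D a' a ≥ 0 ∧ D a a' < 0 := by
  intro d _ _ h
  exact Finset.not_exists_dominating_inf' hP d h

theorem intersection_subset_credal_nondominated
    {A Θ : Type} [Fintype A] [Fintype Θ] [Nonempty A] {K : ℕ}
    (u : A → Θ → Fin K → ℝ)
    (N : Finset ((Fin K → ℝ) → ℝ)) (hN : N.Nonempty)
    (P : Finset (Θ → ℝ)) (hP : P.Nonempty)
    (hpmf : ∀ π ∈ P, (∀ θ, 0 ≤ π θ) ∧ ∑ θ, π θ = 1) :
    let d : (Θ → ℝ) → A → A → ℝ := fun π a1 a2 =>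
      N.inf' hN (fun φ => (∑ θ, φ (u a1 θ) * π θ) - ∑ θ, φ (u a2 θ) * π θ)
    let D : A → A → ℝ := fun a1 a2 => P.inf' hP (fun π => d π a1 a2)
    ∀ a : A, (∀ π ∈ P, ¬ ∃ a', d π a' a ≥ 0 ∧ d π a a' < 0) →
      ¬ ∃ a', D a' a ≥ 0 ∧ D a a' < 0 :=
  intersection_subset_credal_nondominated_general u N hN P hP
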